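/- A valid grid diagram (σX, σO) of size n has connected grid graph (i.e., it represents a knot, a one-component link) if and only if the subgroup generated by the connection permutation σO⁻¹ * σX acts transitively on Fin n. -/

import Mathlib

/-- The incidence relation of a grid diagram encoded by permutations `σX, σO`:
the row `Sum.inl i` is related to the column `Sum.inr c` iff `c` is the column of
the `X` marking or of the `O` marking in row `i`. -/
def gridRel {n : ℕ} (σX σO : Equiv.Perm (Fin n)) :
    (Fin n ⊕ Fin n) → (Fin n ⊕ Fin n) → Prop
  | Sum.inl i, Sum.inr c => c = σX i ∨ c = σO i
  | _, _ => False

/-- The grid graph of a grid diagram: the simple graph on rows and columns,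
with a row adjacent to a column iff one of the two markings of that row lies
in that column. -/
def gridGraph {n : ℕ} (σX σO : Equiv.Perm (Fin n)) : SimpleGraph (Fin n ⊕ Fin n) :=
  SimpleGraph.fromRel (gridRel σX σO)

/-!
Walking from row `i` to the column `σX i` of its `X` and on to the row whose `O` lies in that
column lands in row `(σO⁻¹ * σX) i`, so the rows reachable from a row form exactly its cycle
under the connection permutation; every column is joined to the row of its `X`, so columns add
nothing to connectivity.
-/

open Equiv

theorem MulAction.isPretransitive_zpowers_iff {α : Type*} (f : Perm α) :
    MulAction.IsPretransitive (Subgroup.zpowers f) α ↔ ∀ x y, f.SameCycle x y := by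
  refine ⟨fun h x y => ?_, fun h => ⟨fun x y => ?_⟩⟩
  · obtain ⟨⟨_, k, rfl⟩, hk⟩ := h.exists_smul_eq x y
    exact ⟨k, hk⟩
  · obtain ⟨k, hk⟩ := h x y
    exact ⟨⟨f ^ k, k, rfl⟩, hk⟩

section GridGraph

variable {n : ℕ} {σX σO : Perm (Fin n)}

def gridRow (σX : Perm (Fin n)) : Fin n ⊕ Fin n → Fin n :=
  Sum.elim id σX.symm

theorem gridGraph_adj_inl_inr {i c : Fin n} :
    (gridGraph σX σO).Adj (.inl i) (.inr c) ↔ c = σX i ∨ c = σO i := by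
  simp [gridGraph, gridRel]

theorem gridGraph_adj_iff {u v : Fin n ⊕ Fin n} :
    (gridGraph σX σO).Adj u v ↔ gridRel σX σO u v ∨ gridRel σX σO v u := by
  rw [gridGraph, SimpleGraph.fromRel_adj, and_iff_right_iff_imp]
  rintro (h | h) rfl <;> cases u <;> exact h.elim

theorem sameCycle_gridRow_of_gridRel {u v : Fin n ⊕ Fin n} (h : gridRel σX σO u v) :
    (σO⁻¹ * σX).SameCycle (gridRow σX u) (gridRow σX v) := by
  match u, v, h with
  | .inl _, .inr _, .inl rfl => exact ⟨0, by simp [gridRow]⟩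
  | .inl _, .inr _, .inr rfl => exact ⟨-1, by simp [gridRow, zpow_neg, Perm.mul_apply]⟩

theorem SimpleGraph.Adj.sameCycle_gridRow {u v : Fin n ⊕ Fin n} (h : (gridGraph σX σO).Adj u v) :
    (σO⁻¹ * σX).SameCycle (gridRow σX u) (gridRow σX v) := by
  rcases gridGraph_adj_iff.mp h with h | h
  · exact sameCycle_gridRow_of_gridRel h
  · exact (sameCycle_gridRow_of_gridRel h).symm

theorem SimpleGraph.Reachable.sameCycle_gridRow {u v : Fin n ⊕ Fin n}
    (h : (gridGraph σX σO).Reachable u v) :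
    (σO⁻¹ * σX).SameCycle (gridRow σX u) (gridRow σX v) := by
  obtain ⟨w⟩ := h
  induction w with
  | nil => exact .rfl
  | cons hadj _ ih => exact hadj.sameCycle_gridRow.trans ih

theorem gridGraph_reachable_inl_gridRow (u : Fin n ⊕ Fin n) :
    (gridGraph σX σO).Reachable (.inl (gridRow σX u)) u := by
  cases u with
  | inl i => rfl
  | inr c => exact (gridGraph_adj_inl_inr.mpr (.inl (by simp [gridRow]))).reachable

theorem gridGraph_reachable_inl_apply (i : Fin n) :
    (gridGraph σX σO).Reachable (.inl i) (.inl ((σO⁻¹ * σX) i)) := by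
  have hX : (gridGraph σX σO).Adj (.inl i) (.inr (σX i)) := gridGraph_adj_inl_inr.mpr (.inl rfl)
  have hO : (gridGraph σX σO).Adj (.inl ((σO⁻¹ * σX) i)) (.inr (σX i)) :=
    gridGraph_adj_inl_inr.mpr (.inr (by simp [Perm.mul_apply]))
  exact hX.reachable.trans hO.reachable.symm

theorem gridGraph_reachable_inl_zpow (i : Fin n) (k : ℤ) :
    (gridGraph σX σO).Reachable (.inl i) (.inl (((σO⁻¹ * σX) ^ k) i)) := by
  induction k using Int.induction_on with
  | zero => rfl
  | succ k ih =>
    rw [add_comm, zpow_one_add, Perm.mul_apply]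
    exact ih.trans (gridGraph_reachable_inl_apply _)
  | pred k ih =>
    have h := gridGraph_reachable_inl_apply (σX := σX) (σO := σO) (((σO⁻¹ * σX) ^ (-(k : ℤ) - 1)) i)
    rw [← Perm.mul_apply, ← zpow_one_add, add_sub_cancel] at h
    exact ih.trans h.symm

theorem gridGraph_reachable_inl_inl_iff {i j : Fin n} :
    (gridGraph σX σO).Reachable (.inl i) (.inl j) ↔ (σO⁻¹ * σX).SameCycle i j := by
  refine ⟨SimpleGraph.Reachable.sameCycle_gridRow, ?_⟩
  rintro ⟨k, rfl⟩
  exact gridGraph_reachable_inl_zpow i k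

theorem gridGraph_preconnected_iff :
    (gridGraph σX σO).Preconnected ↔ ∀ i j, (σO⁻¹ * σX).SameCycle i j := by
  refine ⟨fun h i j => gridGraph_reachable_inl_inl_iff.mp (h _ _), fun h u v => ?_⟩
  have hrows := gridGraph_reachable_inl_inl_iff.mpr (h (gridRow σX u) (gridRow σX v))
  exact (gridGraph_reachable_inl_gridRow u).symm.trans <|
    hrows.trans (gridGraph_reachable_inl_gridRow v)

end GridGraph

theorem grid_graph_connected_iff_transitive_general {n : ℕ} (hn : 0 < n)
    (σX σO : Equiv.Perm (Fin n)) :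
    (gridGraph σX σO).Connected ↔
      MulAction.IsPretransitive (Subgroup.zpowers (σO⁻¹ * σX)) (Fin n) := by
  have : Nonempty (Fin n ⊕ Fin n) := ⟨.inl ⟨0, hn⟩⟩
  rw [SimpleGraph.connected_iff, gridGraph_preconnected_iff,
    MulAction.isPretransitive_zpowers_iff, and_iff_left ‹_›]

/-- A valid grid diagram has connected grid graph (i.e., it represents a knot)
if and only if the cyclic subgroup generated by the connection permutation
`σO⁻¹ * σX` acts transitively on `Fin n`. -/
theorem grid_graph_connected_iff_transitive {n : ℕ} (hn : 0 < n)
    (σX σO : Equiv.Perm (Fin n)) (hvalid : ∀ i, σX i ≠ σO i) :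
    (gridGraph σX σO).Connected ↔
      MulAction.IsPretransitive (Subgroup.zpowers (σO⁻¹ * σX)) (Fin n) :=
  grid_graph_connected_iff_transitive_general hn σX σO
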